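/- arXiv:1106.3981 — 2 statements merged into one kernel-verified Lean document; each statement's English description precedes it below -/
import Mathlib

section
/- Let ℓ ≥ 1 be an integer and assume X_{ℓ-1}⁺ = S. Fix an integer k with 0 < k ≤ ℓ, an integer m ≥ 1 with k − m ≥ 0, and an integer l with 0 < l ≤ k − m + 1. For 0 ≤ j ≤ l define H_j = X_{j-1}(X_j ∩ Y_{k-j}) and J_j = X_{j-1}(X_j ∩ Y_{k-j-m}). Then: (a) for 1 ≤ j ≤ l one has H_j = N(H_{j-1}) and J_j = N(J_{j-1}); (b) J_j is a normal subgroup of H_j for every 0 ≤ j ≤ l; and (c) for all 0 ≤ j, j' ≤ l there is a group isomorphism H_j / J_j ≅ H_{j'} / J_{j'}; in particular every H_j / J_j is isomorphic to (X₀ ∩ Y_k)/(X₀ ∩ Y_{k-m}). -/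
/-!
Because `B⁻ = S`, the operator `U ↦ N(U)` commutes with joins, sends `X_{i-1}` to `X_i` and
`X_p ∩ Y_{q+1}` to `X₀(X_{p+1} ∩ Y_q)`; hence `N(H_j) = H_{j+1}`, and likewise for `J_j`, which
is the row `H_j` for the parameter `k - m`. If `J ≤ H` and `H ∩ ker(⁺) ≤ J`, the two coordinate
projections of the group of two-step paths `H ⨝ N(H)` onto `H` and `N(H)` are surjective and the
preimages of `J` and `N(J)` agree, so `N(H)/N(J) ≅ H/J`. For `j < l` the rows satisfy this
condition because `H_j ∩ ker(⁺) ≤ X_j ∩ Y₀ ≤ J_j`.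
-/

open Pointwise

namespace GroupCodes

variable {S : Type*} [Group S]

/-- The subgroups `Xₙ` of the branch group `B ≤ S × S`: `X₀ = {b ∈ B : b⁻ = 1}` and
`X_{n+1} = {b ∈ B : b⁻ ∈ Xₙ⁺}` (here `b⁻ = b.1`, `b⁺ = b.2`, `U⁺ = snd '' U`). -/
def Xnat (B : Subgroup (S × S)) : ℕ → Subgroup (S × S)
  | 0 => B ⊓ (MonoidHom.fst S S).ker
  | n + 1 => B ⊓ (Subgroup.map (MonoidHom.snd S S) (Xnat B n)).comap (MonoidHom.fst S S)

/-- The subgroups `Yₙ` of the branch group `B ≤ S × S`: `Y₀ = {b ∈ B : b⁺ = 1}` and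
`Y_{n+1} = {b ∈ B : b⁺ ∈ Yₙ⁻}`. -/
def Ynat (B : Subgroup (S × S)) : ℕ → Subgroup (S × S)
  | 0 => B ⊓ (MonoidHom.snd S S).ker
  | n + 1 => B ⊓ (Subgroup.map (MonoidHom.fst S S) (Ynat B n)).comap (MonoidHom.snd S S)

/-- `X i` for an integer index `i`, trivial for `i < 0`. -/
def X (B : Subgroup (S × S)) (i : ℤ) : Subgroup (S × S) :=
  if i < 0 then ⊥ else Xnat B i.toNat

/-- `Y i` for an integer index `i`, trivial for `i < 0`. -/
def Y (B : Subgroup (S × S)) (i : ℤ) : Subgroup (S × S) :=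
  if i < 0 then ⊥ else Ynat B i.toNat

/-- The next-branch set `N(U) = {b ∈ B : b⁻ ∈ U⁺}`. -/
def N (B U : Subgroup (S × S)) : Subgroup (S × S) :=
  B ⊓ (Subgroup.map (MonoidHom.snd S S) U).comap (MonoidHom.fst S S)

/-- The previous-branch set `P(U) = {b ∈ B : b⁺ ∈ U⁻}`. -/
def P (B U : Subgroup (S × S)) : Subgroup (S × S) :=
  B ⊓ (Subgroup.map (MonoidHom.fst S S) U).comap (MonoidHom.snd S S)

/-- `IsQuotIso J H J' H'` says that `J` (viewed inside `H`) is normal in `H`, `J'` is normal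
in `H'`, and there is a group isomorphism `H / J ≅ H' / J'`. -/
def IsQuotIso {G₁ G₂ : Type*} [Group G₁] [Group G₂]
    (J H : Subgroup G₁) (J' H' : Subgroup G₂) : Prop :=
  (J.subgroupOf H).Normal ∧ (J'.subgroupOf H').Normal ∧
    ∀ [(J.subgroupOf H).Normal] [(J'.subgroupOf H').Normal],
      Nonempty ((H ⧸ J.subgroupOf H) ≃* (H' ⧸ J'.subgroupOf H'))

/-- `T` is a right transversal of `J` inside `H`: `T ⊆ H` and `T` meets every right coset
of `J` contained in `H` in exactly one element. -/
def IsRightTransversalIn {G : Type*} [Group G] (J H : Subgroup G) (T : Set G) : Prop :=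
  T ⊆ (H : Set G) ∧ ∀ h ∈ H, ∃! t, t ∈ T ∧ t * h⁻¹ ∈ J

/-- The group of trellis path segments `(b₀, …, bₙ)` with `b_j ∈ F j` and matching states
`b_j⁺ = b_{j+1}⁻`; a subgroup of the direct product `(S × S)^{n+1}`. -/
def chainSubgroup (n : ℕ) (F : ℤ → Subgroup (S × S)) : Subgroup (Fin (n + 1) → S × S) where
  carrier := {b | (∀ i : Fin (n + 1), b i ∈ F (i : ℤ)) ∧
    ∀ i : Fin n, (b i.castSucc).2 = (b i.succ).1}
  one_mem' := ⟨fun _ => one_mem _, fun _ => rfl⟩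
  mul_mem' := by
    rintro a b ⟨ha1, ha2⟩ ⟨hb1, hb2⟩
    refine ⟨fun i => mul_mem (ha1 i) (hb1 i), fun i => ?_⟩
    simp only [Pi.mul_apply, Prod.snd_mul, Prod.fst_mul, ha2 i, hb2 i]
  inv_mem' := by
    rintro a ⟨ha1, ha2⟩
    refine ⟨fun i => inv_mem (ha1 i), fun i => ?_⟩
    simp only [Pi.inv_apply, Prod.snd_inv, Prod.fst_inv, ha2 i]

/-- `U ⨝ N(U)`: the group of trellis path segments `(b, b')` of length two with `b ∈ U`,
`b' ∈ N(U)` and `b⁺ = b'⁻`; a subgroup of the direct product `(S × S) × (S × S)`. -/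
def JoinN (B U : Subgroup (S × S)) : Subgroup ((S × S) × (S × S)) where
  carrier := {p | p.1 ∈ U ∧ p.2 ∈ N B U ∧ p.1.2 = p.2.1}
  one_mem' := ⟨one_mem _, one_mem _, rfl⟩
  mul_mem' := by
    rintro a b ⟨ha1, ha2, ha3⟩ ⟨hb1, hb2, hb3⟩
    exact ⟨mul_mem ha1 hb1, mul_mem ha2 hb2, by
      simp only [Prod.fst_mul, Prod.snd_mul, ha3, hb3]⟩
  inv_mem' := by
    rintro a ⟨ha1, ha2, ha3⟩
    exact ⟨inv_mem ha1, inv_mem ha2, by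
      simp only [Prod.fst_inv, Prod.snd_inv, ha3]⟩

/-- `H_j = X_{j-1}(X_j ∩ Y_{k-j})` (as a subgroup, realized as the join). -/
def HH (B : Subgroup (S × S)) (k j : ℤ) : Subgroup (S × S) :=
  X B (j - 1) ⊔ (X B j ⊓ Y B (k - j))

/-- `J_j = X_{j-1}(X_j ∩ Y_{k-j-m})` (as a subgroup, realized as the join). -/
def JJ (B : Subgroup (S × S)) (k m j : ℤ) : Subgroup (S × S) :=
  X B (j - 1) ⊔ (X B j ⊓ Y B (k - j - m))

theorem nonempty_mulEquiv_of_ker_eq {G A C : Type*} [Group G] [Group A] [Group C]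
    (f : G →* A) (g : G →* C) (hf : Function.Surjective f) (hg : Function.Surjective g)
    (h : f.ker = g.ker) : Nonempty (A ≃* C) :=
  ⟨(QuotientGroup.quotientKerEquivOfSurjective f hf).symm.trans
    ((QuotientGroup.quotientMulEquivOfEq h).trans
      (QuotientGroup.quotientKerEquivOfSurjective g hg))⟩

namespace IsQuotIso

variable {G₁ G₂ G₃ : Type*} [Group G₁] [Group G₂] [Group G₃]

theorem refl {J H : Subgroup G₁} (hJ : (J.subgroupOf H).Normal) : IsQuotIso J H J H :=
  ⟨hJ, hJ, ⟨MulEquiv.refl _⟩⟩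

theorem symm {J H : Subgroup G₁} {J' H' : Subgroup G₂} (h : IsQuotIso J H J' H') :
    IsQuotIso J' H' J H :=
  ⟨h.2.1, h.1, fun {_ _} => h.2.2.map MulEquiv.symm⟩

theorem trans {J H : Subgroup G₁} {J' H' : Subgroup G₂} {J'' H'' : Subgroup G₃}
    (h : IsQuotIso J H J' H') (h' : IsQuotIso J' H' J'' H'') : IsQuotIso J H J'' H'' :=
  haveI := h.2.1
  ⟨h.1, h'.2.1, fun {_ _} => h.2.2.elim fun e => h'.2.2.map e.trans⟩

end IsQuotIso

section Trellis

variable {B U V : Subgroup (S × S)}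

theorem mem_N {b : S × S} : b ∈ N B U ↔ b ∈ B ∧ ∃ u ∈ U, u.2 = b.1 := by
  simp [N]

theorem mem_P {b : S × S} : b ∈ P B U ↔ b ∈ B ∧ ∃ u ∈ U, u.1 = b.2 := by
  simp [P]

theorem N_le : N B U ≤ B := inf_le_left

theorem N_mono : Monotone (N B) := fun _ _ hUV _ hb =>
  let ⟨hbB, u, hu, hub⟩ := mem_N.mp hb
  mem_N.mpr ⟨hbB, u, hUV hu, hub⟩

theorem P_mono : Monotone (P B) := fun _ _ hUV _ hb =>
  let ⟨hbB, u, hu, hub⟩ := mem_P.mp hb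
  mem_P.mpr ⟨hbB, u, hUV hu, hub⟩

theorem N_eq_map_comap :
    N B U = ((U.map (MonoidHom.snd S S)).comap ((MonoidHom.fst S S).comp B.subtype)).map
      B.subtype := by
  ext b
  simpa [mem_N] using and_comm

theorem N_sup (hB1 : Subgroup.map (MonoidHom.fst S S) B = ⊤) :
    N B (U ⊔ V) = N B U ⊔ N B V := by
  have hsurj : Function.Surjective ((MonoidHom.fst S S).comp B.subtype) := by
    rw [← MonoidHom.range_eq_top, MonoidHom.range_comp, Subgroup.range_subtype, hB1]
  simp only [N_eq_map_comap, Subgroup.map_sup, ← Subgroup.comap_sup_eq _ _ _ hsurj]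

theorem le_normalizer_N (hB2 : Subgroup.map (MonoidHom.snd S S) B = ⊤)
    (hU : B ≤ Subgroup.normalizer (U : Set (S × S))) :
    B ≤ Subgroup.normalizer (N B U : Set (S × S)) := by
  refine Subgroup.le_normalizer_iff.mpr fun b hb x hx => ?_
  obtain ⟨hxB, u, hu, hux⟩ := mem_N.mp hx
  obtain ⟨c, hc, hcb⟩ : b.1 ∈ B.map (MonoidHom.snd S S) := hB2 ▸ Subgroup.mem_top _
  refine mem_N.mpr ⟨mul_mem (mul_mem hb hxB) (inv_mem hb), c * u * c⁻¹,
    Subgroup.le_normalizer_iff.mp hU c hc u hu, ?_⟩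
  simp_all

theorem le_normalizer_P (hB1 : Subgroup.map (MonoidHom.fst S S) B = ⊤)
    (hU : B ≤ Subgroup.normalizer (U : Set (S × S))) :
    B ≤ Subgroup.normalizer (P B U : Set (S × S)) := by
  refine Subgroup.le_normalizer_iff.mpr fun b hb x hx => ?_
  obtain ⟨hxB, u, hu, hux⟩ := mem_P.mp hx
  obtain ⟨c, hc, hcb⟩ : b.2 ∈ B.map (MonoidHom.fst S S) := hB1 ▸ Subgroup.mem_top _
  refine mem_P.mpr ⟨mul_mem (mul_mem hb hxB) (inv_mem hb), c * u * c⁻¹,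
    Subgroup.le_normalizer_iff.mp hU c hc u hu, ?_⟩
  simp_all


theorem Xnat_zero : Xnat B 0 = N B ⊥ := by
  simp [Xnat, N, MonoidHom.ker]

theorem X_natCast (n : ℕ) : X B n = Xnat B n := by
  simp [X]

theorem X_of_neg {i : ℤ} (hi : i < 0) : X B i = ⊥ := if_pos hi

theorem X_succ {i : ℤ} (hi : -1 ≤ i) : X B (i + 1) = N B (X B i) := by
  obtain rfl | hi := hi.eq_or_lt
  · rw [X_of_neg (show (-1 : ℤ) < 0 by norm_num), neg_add_cancel, ← Nat.cast_zero, X_natCast,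
      Xnat_zero]
  · lift i to ℕ using (by omega)
    rw [show (i : ℤ) + 1 = (i + 1 : ℕ) by push_cast; rfl, X_natCast, X_natCast]
    rfl

theorem Ynat_zero : Ynat B 0 = P B ⊥ := by
  simp [Ynat, P, MonoidHom.ker]

theorem Y_natCast (n : ℕ) : Y B n = Ynat B n := by
  simp [Y]

theorem Y_of_neg {i : ℤ} (hi : i < 0) : Y B i = ⊥ := if_pos hi

theorem Y_succ {i : ℤ} (hi : -1 ≤ i) : Y B (i + 1) = P B (Y B i) := by
  obtain rfl | hi := hi.eq_or_lt
  · rw [Y_of_neg (show (-1 : ℤ) < 0 by norm_num), neg_add_cancel, ← Nat.cast_zero, Y_natCast,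
      Ynat_zero]
  · lift i to ℕ using (by omega)
    rw [show (i : ℤ) + 1 = (i + 1 : ℕ) by push_cast; rfl, Y_natCast, Y_natCast]
    rfl


theorem X_induction {motive : Subgroup (S × S) → Prop} (bot : motive ⊥)
    (N_of : ∀ U, motive U → motive (N B U)) (i : ℤ) : motive (X B i) := by
  obtain hi | hi := lt_or_ge i (-1)
  · rwa [X_of_neg (by omega)]
  induction i, hi using Int.leInduction with
  | base => rwa [X_of_neg (by norm_num)]
  | succ i hi ih => rw [X_succ hi]; exact N_of _ ih

theorem Y_induction {motive : Subgroup (S × S) → Prop} (bot : motive ⊥)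
    (P_of : ∀ U, motive U → motive (P B U)) (i : ℤ) : motive (Y B i) := by
  obtain hi | hi := lt_or_ge i (-1)
  · rwa [Y_of_neg (by omega)]
  induction i, hi using Int.leInduction with
  | base => rwa [Y_of_neg (by norm_num)]
  | succ i hi ih => rw [Y_succ hi]; exact P_of _ ih

theorem X_le (i : ℤ) : X B i ≤ B :=
  X_induction (motive := (· ≤ B)) bot_le (fun _ _ => inf_le_left) i

theorem Y_le (i : ℤ) : Y B i ≤ B :=
  Y_induction (motive := (· ≤ B)) bot_le (fun _ _ => inf_le_left) i

theorem le_normalizer_X (hB2 : Subgroup.map (MonoidHom.snd S S) B = ⊤) (i : ℤ) :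
    B ≤ Subgroup.normalizer (X B i : Set (S × S)) :=
  X_induction (motive := fun U : Subgroup (S × S) => B ≤ Subgroup.normalizer (U : Set (S × S)))
    Subgroup.le_normalizer_of_normal (fun _ => le_normalizer_N hB2) i

theorem le_normalizer_Y (hB1 : Subgroup.map (MonoidHom.fst S S) B = ⊤) (i : ℤ) :
    B ≤ Subgroup.normalizer (Y B i : Set (S × S)) :=
  Y_induction (motive := fun U : Subgroup (S × S) => B ≤ Subgroup.normalizer (U : Set (S × S)))
    Subgroup.le_normalizer_of_normal (fun _ => le_normalizer_P hB1) i

theorem X_mono : Monotone (X B) := by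
  refine monotone_int_of_le_succ fun i => ?_
  obtain hi | hi := lt_or_ge i (-1)
  · simp [X_of_neg (by omega : i < 0)]
  induction i, hi using Int.leInduction with
  | base => simp [X_of_neg (show (-1 : ℤ) < 0 by norm_num)]
  | succ i hi ih => rw [X_succ hi, X_succ (by omega)]; exact N_mono ih

theorem Y_mono : Monotone (Y B) := by
  refine monotone_int_of_le_succ fun i => ?_
  obtain hi | hi := lt_or_ge i (-1)
  · simp [Y_of_neg (by omega : i < 0)]
  induction i, hi using Int.leInduction with
  | base => simp [Y_of_neg (show (-1 : ℤ) < 0 by norm_num)]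
  | succ i hi ih => rw [Y_succ hi, Y_succ (by omega)]; exact P_mono ih

theorem Y_zero : Y B 0 = B ⊓ (MonoidHom.snd S S).ker := by
  rw [← Nat.cast_zero, Y_natCast]
  rfl

theorem X_zero_eq_N_bot : X B 0 = N B ⊥ := by
  rw [← Nat.cast_zero, X_natCast, Xnat_zero]

theorem N_X_inf_Y {p q : ℤ} (hp : -1 ≤ p) (hq : -1 ≤ q) :
    N B (X B p ⊓ Y B (q + 1)) = X B 0 ⊔ (X B (p + 1) ⊓ Y B q) := by
  refine le_antisymm (fun c hc => ?_) (sup_le ?_ fun d hd => ?_)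
  · obtain ⟨hcB, u, hu, huc⟩ := mem_N.mp hc
    obtain ⟨huX, huY⟩ := Subgroup.mem_inf.mp hu
    rw [Y_succ hq] at huY
    obtain ⟨-, d, hdY, hdu⟩ := mem_P.mp huY
    have hdX : d ∈ X B (p + 1) := by
      rw [X_succ hp]
      exact mem_N.mpr ⟨Y_le q hdY, u, huX, hdu.symm⟩
    have hcd : c * d⁻¹ ∈ X B 0 := by
      rw [X_zero_eq_N_bot]
      exact mem_N.mpr ⟨mul_mem hcB (inv_mem (Y_le q hdY)), 1, one_mem _, by simp [← huc, hdu]⟩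
    simpa using mul_mem (Subgroup.mem_sup_left hcd)
      (Subgroup.mem_sup_right (Subgroup.mem_inf.mpr ⟨hdX, hdY⟩))
  · rw [X_zero_eq_N_bot]
    exact N_mono bot_le
  · obtain ⟨hdX, hdY⟩ := Subgroup.mem_inf.mp hd
    rw [X_succ hp] at hdX
    obtain ⟨hdB, u, huX, hud⟩ := mem_N.mp hdX
    have huY : u ∈ Y B (q + 1) := by
      rw [Y_succ hq]
      exact mem_P.mpr ⟨X_le p huX, d, hdY, hud.symm⟩
    exact mem_N.mpr ⟨hdB, u, Subgroup.mem_inf.mpr ⟨huX, huY⟩, hud⟩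

end Trellis

theorem snd_mem_N_iff_fst_mem {B J H : Subgroup (S × S)} (hJH : J ≤ H)
    (hker : H ⊓ (MonoidHom.snd S S).ker ≤ J) {p : (S × S) × (S × S)} (hp : p ∈ JoinN B H) :
    p.2 ∈ N B J ↔ p.1 ∈ J := by
  obtain ⟨hp1, hp2, hp12⟩ := hp
  refine ⟨fun h => ?_, fun h => mem_N.mpr ⟨N_le hp2, p.1, h, hp12⟩⟩
  obtain ⟨-, u, hu, hup⟩ := mem_N.mp h
  have : p.1 * u⁻¹ ∈ J :=
    hker (Subgroup.mem_inf.mpr ⟨mul_mem hp1 (inv_mem (hJH hu)),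
      MonoidHom.mem_ker.mpr (by simp [hp12, hup])⟩)
  simpa using mul_mem this hu

theorem isQuotIso_N {B J H : Subgroup (S × S)} (hB1 : Subgroup.map (MonoidHom.fst S S) B = ⊤)
    (hB2 : Subgroup.map (MonoidHom.snd S S) B = ⊤)
    (hJ : B ≤ Subgroup.normalizer (J : Set (S × S))) (hHB : H ≤ B) (hJH : J ≤ H)
    (hker : H ⊓ (MonoidHom.snd S S).ker ≤ J) : IsQuotIso (N B J) (N B H) J H := by
  refine ⟨Subgroup.normal_subgroupOf_of_le_normalizer (N_le.trans (le_normalizer_N hB2 hJ)),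
    Subgroup.normal_subgroupOf_of_le_normalizer (hHB.trans hJ), fun {_ _} => ?_⟩
  let π₁ : JoinN B H →* H :=
    ((MonoidHom.fst _ _).comp (JoinN B H).subtype).codRestrict H fun p => p.2.1
  let π₂ : JoinN B H →* N B H :=
    ((MonoidHom.snd _ _).comp (JoinN B H).subtype).codRestrict (N B H) fun p => p.2.2.1
  refine nonempty_mulEquiv_of_ker_eq ((QuotientGroup.mk' _).comp π₂)
    ((QuotientGroup.mk' _).comp π₁) ((QuotientGroup.mk'_surjective _).comp ?_)
    ((QuotientGroup.mk'_surjective _).comp ?_) ?_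
  · rintro ⟨b, hb⟩
    obtain ⟨-, u, hu, hub⟩ := mem_N.mp hb
    exact ⟨⟨(u, b), hu, hb, hub⟩, rfl⟩
  · rintro ⟨h, hh⟩
    obtain ⟨b, hbB, hb⟩ : h.2 ∈ B.map (MonoidHom.fst S S) := hB1 ▸ Subgroup.mem_top _
    exact ⟨⟨(h, b), hh, mem_N.mpr ⟨hbB, h, hh, hb.symm⟩, hb.symm⟩, rfl⟩
  · ext p
    simp only [← MonoidHom.comap_ker, QuotientGroup.ker_mk', Subgroup.mem_comap,
      Subgroup.mem_subgroupOf, π₁, π₂]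
    exact snd_mem_N_iff_fst_mem hJH hker p.2

section Rows

variable {B : Subgroup (S × S)} {k k' j : ℤ}

theorem JJ_eq_HH (k m j : ℤ) : JJ B k m j = HH B (k - m) j := by
  rw [JJ, HH, sub_right_comm]

theorem HH_zero (k : ℤ) : HH B k 0 = X B 0 ⊓ Y B k := by
  simp [HH, X_of_neg]

theorem HH_le (k j : ℤ) : HH B k j ≤ B :=
  sup_le (X_le _) (inf_le_left.trans (X_le _))

theorem HH_mono (hk : k' ≤ k) (j : ℤ) : HH B k' j ≤ HH B k j :=
  sup_le_sup_left (inf_le_inf_left _ (Y_mono (by omega))) _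

theorem le_normalizer_HH (hB1 : Subgroup.map (MonoidHom.fst S S) B = ⊤)
    (hB2 : Subgroup.map (MonoidHom.snd S S) B = ⊤) (k j : ℤ) :
    B ≤ Subgroup.normalizer (HH B k j : Set (S × S)) :=
  (le_inf (le_normalizer_X hB2 _) ((le_inf (le_normalizer_X hB2 _) (le_normalizer_Y hB1 _)).trans
    Subgroup.inf_normalizer_le_normalizer_inf)).trans
    (Subgroup.normalizer_inf_normalizer_le_normalizer_sup _ _)

theorem N_HH (hB1 : Subgroup.map (MonoidHom.fst S S) B = ⊤) (hj : 0 ≤ j) (hjk : j ≤ k) :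
    N B (HH B k j) = HH B k (j + 1) := by
  rw [HH, HH, N_sup hB1, ← X_succ (by omega : -1 ≤ j - 1), sub_add_cancel,
    show k - j = k - (j + 1) + 1 by ring, N_X_inf_Y (by omega) (by omega), ← sup_assoc,
    sup_eq_left.mpr (X_mono hj), add_sub_cancel_right]

theorem HH_inf_ker_snd_le (hjk : j ≤ k') (k : ℤ) :
    HH B k j ⊓ (MonoidHom.snd S S).ker ≤ HH B k' j :=
  calc HH B k j ⊓ (MonoidHom.snd S S).ker ≤ X B j ⊓ Y B 0 := by
        rw [Y_zero, ← inf_assoc]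
        exact inf_le_inf_right _ (le_inf (sup_le (X_mono (by omega)) inf_le_left) (HH_le k j))
    _ ≤ X B j ⊓ Y B (k' - j) := inf_le_inf_left _ (Y_mono (by omega))
    _ ≤ HH B k' j := le_sup_right

theorem isQuotIso_HH_HH_zero (hB1 : Subgroup.map (MonoidHom.fst S S) B = ⊤)
    (hB2 : Subgroup.map (MonoidHom.snd S S) B = ⊤) (hk : k' ≤ k) (hj0 : 0 ≤ j)
    (hj : j ≤ k' + 1) : IsQuotIso (HH B k' j) (HH B k j) (HH B k' 0) (HH B k 0) := by
  induction j, hj0 using Int.leInduction with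
  | base => exact .refl (Subgroup.normal_subgroupOf_of_le_normalizer
      ((HH_le k 0).trans (le_normalizer_HH hB1 hB2 k' 0)))
  | succ j hj0 ih =>
    rw [← N_HH hB1 hj0 (by omega), ← N_HH hB1 hj0 (by omega)]
    exact (isQuotIso_N hB1 hB2 (le_normalizer_HH hB1 hB2 k' j) (HH_le k j) (HH_mono hk j)
      (HH_inf_ker_snd_le (by omega) k)).trans (ih (by omega))

end Rows

theorem schreier_rows_iso_general
    (B : Subgroup (S × S))
    (hB1 : Subgroup.map (MonoidHom.fst S S) B = ⊤)
    (hB2 : Subgroup.map (MonoidHom.snd S S) B = ⊤)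
    (k m l : ℤ)
    (hm : 1 ≤ m)
    (hl : l ≤ k - m + 1) :
    (∀ j : ℤ, 1 ≤ j → j ≤ l →
      HH B k j = N B (HH B k (j - 1)) ∧ JJ B k m j = N B (JJ B k m (j - 1))) ∧
    (∀ j : ℤ, 0 ≤ j → j ≤ l →
      JJ B k m j ≤ HH B k j ∧ ((JJ B k m j).subgroupOf (HH B k j)).Normal) ∧
    (∀ j j' : ℤ, 0 ≤ j → j ≤ l → 0 ≤ j' → j' ≤ l →
      IsQuotIso (JJ B k m j) (HH B k j) (JJ B k m j') (HH B k j')) ∧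
    (∀ j : ℤ, 0 ≤ j → j ≤ l →
      IsQuotIso (JJ B k m j) (HH B k j) (X B 0 ⊓ Y B (k - m)) (X B 0 ⊓ Y B k)) := by
  have hrow (j : ℤ) (hj0 : 0 ≤ j) (hjl : j ≤ l) :
      IsQuotIso (JJ B k m j) (HH B k j) (JJ B k m 0) (HH B k 0) := by
    rw [JJ_eq_HH, JJ_eq_HH]
    exact isQuotIso_HH_HH_zero hB1 hB2 (by omega) hj0 (by omega)
  refine ⟨fun j hj1 hjl => ?_, fun j _ _ => ?_,
    fun j j' hj0 hjl hj'0 hj'l => (hrow j hj0 hjl).trans (hrow j' hj'0 hj'l).symm,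
    fun j hj0 hjl => by simpa only [JJ_eq_HH, HH_zero] using hrow j hj0 hjl⟩
  · rw [JJ_eq_HH, JJ_eq_HH, N_HH hB1 (k := k) (j := j - 1) (by omega) (by omega),
      N_HH hB1 (k := k - m) (j := j - 1) (by omega) (by omega), sub_add_cancel]
    exact ⟨rfl, rfl⟩
  · rw [JJ_eq_HH]
    exact ⟨HH_mono (by omega) j, Subgroup.normal_subgroupOf_of_le_normalizer
      ((HH_le k j).trans (le_normalizer_HH hB1 hB2 (k - m) j))⟩

/-- for the rows `H_j, J_j` of the controllable Schreier matrix: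
(a) `H_j = N(H_{j-1})`, `J_j = N(J_{j-1})`; (b) `J_j ⊴ H_j`; (c) all quotients `H_j / J_j`
are mutually isomorphic, and isomorphic to `(X₀ ∩ Y_k)/(X₀ ∩ Y_{k-m})`. -/
theorem schreier_rows_iso
    (B : Subgroup (S × S))
    (hB1 : Subgroup.map (MonoidHom.fst S S) B = ⊤)
    (hB2 : Subgroup.map (MonoidHom.snd S S) B = ⊤)
    (ℓ k m l : ℤ) (hℓ : 1 ≤ ℓ)
    (hctl : Subgroup.map (MonoidHom.snd S S) (X B (ℓ - 1)) = ⊤)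
    (hk0 : 0 < k) (hkℓ : k ≤ ℓ)
    (hm : 1 ≤ m) (hkm : 0 ≤ k - m)
    (hl0 : 0 < l) (hl : l ≤ k - m + 1) :
    (∀ j : ℤ, 1 ≤ j → j ≤ l →
      HH B k j = N B (HH B k (j - 1)) ∧ JJ B k m j = N B (JJ B k m (j - 1))) ∧
    (∀ j : ℤ, 0 ≤ j → j ≤ l →
      JJ B k m j ≤ HH B k j ∧ ((JJ B k m j).subgroupOf (HH B k j)).Normal) ∧
    (∀ j j' : ℤ, 0 ≤ j → j ≤ l → 0 ≤ j' → j' ≤ l →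
      IsQuotIso (JJ B k m j) (HH B k j) (JJ B k m j') (HH B k j')) ∧
    (∀ j : ℤ, 0 ≤ j → j ≤ l →
      IsQuotIso (JJ B k m j) (HH B k j) (X B 0 ⊓ Y B (k - m)) (X B 0 ⊓ Y B k)) :=
  schreier_rows_iso_general B hB1 hB2 k m l hm hl

end GroupCodes
end

section
/- Let ℓ ≥ 1 be an integer. Fix j with 0 ≤ j ≤ ℓ and let Y' ≤ Y'' be subgroups of B with Y'' ≤ Y_{ℓ-j} and Y' a normal subgroup of Y''. Set J = X_{j-1}(X_j ∩ Y'), H = X_{j-1}(X_j ∩ Y''), and D = (X_j ∩ Y')(X_{j-1} ∩ Y''). Then D is a normal subgroup of X_j ∩ Y'', J is a normal subgroup of H, and there is a group isomorphism H / J ≅ (X_j ∩ Y'') / D. -/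
open Pointwise

namespace GroupCodes

variable {S : Type*} [Group S]

section Aux

variable {G : Type*} [Group G]

/-- If `K` normalizes `N`, then elements of `N ⊔ K` decompose as `n * k`. -/
theorem mem_sup_of_normalizes {N K : Subgroup G}
    (hc : ∀ k ∈ K, ∀ n ∈ N, k * n * k⁻¹ ∈ N) {g : G} (hg : g ∈ N ⊔ K) :
    ∃ n ∈ N, ∃ k ∈ K, g = n * k := by
  let M : Subgroup G :=
    { carrier := {g | ∃ n ∈ N, ∃ k ∈ K, g = n * k}
      one_mem' := ⟨1, one_mem _, 1, one_mem _, by simp⟩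
      mul_mem' := by
        rintro a b ⟨n₁, hn₁, k₁, hk₁, rfl⟩ ⟨n₂, hn₂, k₂, hk₂, rfl⟩
        exact ⟨n₁ * (k₁ * n₂ * k₁⁻¹), mul_mem hn₁ (hc k₁ hk₁ n₂ hn₂), k₁ * k₂,
          mul_mem hk₁ hk₂, by group⟩
      inv_mem' := by
        rintro a ⟨n, hn, k, hk, rfl⟩
        exact ⟨k⁻¹ * n⁻¹ * k⁻¹⁻¹, hc k⁻¹ (inv_mem hk) n⁻¹ (inv_mem hn), k⁻¹, inv_mem hk,
          by group⟩ }
  have hNK : N ⊔ K ≤ M := by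
    refine sup_le (fun n hn => ⟨n, hn, 1, one_mem _, by simp⟩)
      (fun k hk => ⟨1, one_mem _, k, hk, by simp⟩)
  exact hNK hg

theorem conj_sup_mem {g : G} {P Q R : Subgroup G}
    (hP : ∀ x ∈ P, g * x * g⁻¹ ∈ R) (hQ : ∀ x ∈ Q, g * x * g⁻¹ ∈ R) :
    ∀ x ∈ P ⊔ Q, g * x * g⁻¹ ∈ R := by
  have h : P ⊔ Q ≤ R.comap (MulAut.conj g).toMonoidHom := by
    refine sup_le (fun x hx => ?_) (fun x hx => ?_) <;>
      simpa [Subgroup.mem_comap] using (by first | exact hP x hx | exact hQ x hx)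
  intro x hx
  simpa [Subgroup.mem_comap] using h hx

/-- Abstract Zassenhaus-style lemma. -/
theorem abstract_zassenhaus (B A' A Y' Y'' : Subgroup G)
    (hA'A : A' ≤ A) (hAB : A ≤ B) (hY''B : Y'' ≤ B) (hY'Y'' : Y' ≤ Y'')
    (hA'n : ∀ g ∈ B, ∀ x ∈ A', g * x * g⁻¹ ∈ A')
    (hAn : ∀ g ∈ B, ∀ x ∈ A, g * x * g⁻¹ ∈ A)
    (hnorm : ∀ g ∈ Y'', ∀ x ∈ Y', g * x * g⁻¹ ∈ Y') :
    (((A ⊓ Y') ⊔ (A' ⊓ Y'')).subgroupOf (A ⊓ Y'')).Normal ∧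
    (A' ⊔ (A ⊓ Y')) ≤ (A' ⊔ (A ⊓ Y'')) ∧
    ((A' ⊔ (A ⊓ Y')).subgroupOf (A' ⊔ (A ⊓ Y''))).Normal ∧
    IsQuotIso (A' ⊔ (A ⊓ Y')) (A' ⊔ (A ⊓ Y''))
      ((A ⊓ Y') ⊔ (A' ⊓ Y'')) (A ⊓ Y'') := by
  set K' : Subgroup G := A ⊓ Y' with hK'
  set K'' : Subgroup G := A ⊓ Y'' with hK''
  set D : Subgroup G := K' ⊔ (A' ⊓ Y'') with hD
  set J : Subgroup G := A' ⊔ K' with hJ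
  set H : Subgroup G := A' ⊔ K'' with hH
  have hK'B : K' ≤ B := inf_le_left.trans hAB
  have hK''B : K'' ≤ B := inf_le_left.trans hAB
  have hA'B : A' ≤ B := hA'A.trans hAB
  have hHB : H ≤ B := sup_le hA'B hK''B
  have hJB : J ≤ B := sup_le hA'B hK'B
  have hK'K'' : K' ≤ K'' := inf_le_inf_left A hY'Y''
  have hJH : J ≤ H := sup_le le_sup_left (hK'K''.trans le_sup_right)
  -- conjugation by elements of K'' preserves K' and A' ⊓ Y''
  have hconjK' : ∀ g ∈ K'', ∀ x ∈ K', g * x * g⁻¹ ∈ K' := by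
    intro g hg x hx
    obtain ⟨hg1, hg2⟩ := Subgroup.mem_inf.mp hg
    obtain ⟨hx1, hx2⟩ := Subgroup.mem_inf.mp hx
    exact Subgroup.mem_inf.mpr ⟨hAn g (hK''B hg) x hx1, hnorm g hg2 x hx2⟩
  have hconjA'Y'' : ∀ g ∈ K'', ∀ x ∈ A' ⊓ Y'', g * x * g⁻¹ ∈ A' ⊓ Y'' := by
    intro g hg x hx
    obtain ⟨hg1, hg2⟩ := Subgroup.mem_inf.mp hg
    obtain ⟨hx1, hx2⟩ := Subgroup.mem_inf.mp hx
    exact Subgroup.mem_inf.mpr ⟨hA'n g (hK''B hg) x hx1,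
      mul_mem (mul_mem hg2 hx2) (inv_mem hg2)⟩
  -- D normal in K''
  have hDconj : ∀ g ∈ K'', ∀ x ∈ D, g * x * g⁻¹ ∈ D := fun g hg =>
    conj_sup_mem (fun x hx => Subgroup.mem_sup_left (hconjK' g hg x hx))
      (fun x hx => Subgroup.mem_sup_right (hconjA'Y'' g hg x hx))
  have hDn : (D.subgroupOf K'').Normal := by
    constructor
    rintro ⟨x, hx⟩ hxD ⟨g, hg⟩
    exact hDconj g hg x hxD
  -- decomposition of H
  have hsupH : ∀ h ∈ H, ∃ n ∈ A', ∃ k ∈ K'', h = n * k := fun h hh =>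
    mem_sup_of_normalizes (fun k hk n hn => hA'n k (hK''B hk) n hn) hh
  have hsupJ : ∀ h ∈ J, ∃ n ∈ A', ∃ k ∈ K', h = n * k := fun h hh =>
    mem_sup_of_normalizes (fun k hk n hn => hA'n k (hK'B hk) n hn) hh
  -- J normal in H
  have hJconj : ∀ g ∈ H, ∀ x ∈ J, g * x * g⁻¹ ∈ J := by
    intro g hg
    refine conj_sup_mem (fun x hx => Subgroup.mem_sup_left (hA'n g (hHB hg) x hx)) ?_
    intro m hm
    obtain ⟨n, hn, k, hk, rfl⟩ := hsupH g hg
    have hm' : k * m * k⁻¹ ∈ K' := hconjK' k hk m hm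
    set m' := k * m * k⁻¹ with hm'def
    have hcomm : n * (m' * n⁻¹ * m'⁻¹) ∈ A' :=
      mul_mem hn (hA'n m' (hK'B hm') n⁻¹ (inv_mem hn))
    have : n * k * m * (n * k)⁻¹ = (n * (m' * n⁻¹ * m'⁻¹)) * m' := by
      simp only [hm'def]; group
    rw [this]
    exact mul_mem (Subgroup.mem_sup_left hcomm) (Subgroup.mem_sup_right hm')
  have hJn : (J.subgroupOf H).Normal := by
    constructor
    rintro ⟨x, hx⟩ hxJ ⟨g, hg⟩
    exact hJconj g hg x hxJ
  refine ⟨hDn, hJH, hJn, hJn, hDn, ?_⟩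

  -- the homomorphism φ : K'' → H ⧸ J
  haveI := hJn
  haveI := hDn
  let φ : K'' →* H ⧸ J.subgroupOf H :=
    (QuotientGroup.mk' (J.subgroupOf H)).comp (Subgroup.inclusion le_sup_right)
  have hφsurj : Function.Surjective φ := by
    rintro q
    induction q using QuotientGroup.induction_on with
    | H h =>
      obtain ⟨hval, hh⟩ := h
      obtain ⟨n, hn, k, hk, hdec⟩ := hsupH hval hh
      refine ⟨⟨k, hk⟩, ?_⟩
      have : (⟨hval, hh⟩ : H)⁻¹ * (Subgroup.inclusion le_sup_right ⟨k, hk⟩) ∈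
          J.subgroupOf H := by
        simp only [Subgroup.mem_subgroupOf]
        show (hval⁻¹ * k : G) ∈ J
        rw [hdec]
        have : (n * k)⁻¹ * k = k⁻¹ * n⁻¹ * k := by group
        rw [this]
        exact Subgroup.mem_sup_left (by simpa using hA'n k⁻¹ (inv_mem (hK''B hk)) n⁻¹ (inv_mem hn))
      exact (QuotientGroup.eq.mpr this).symm
  have hker : φ.ker = D.subgroupOf K'' := by
    ext ⟨x, hx⟩
    simp only [φ, MonoidHom.mem_ker, MonoidHom.comp_apply, QuotientGroup.mk'_apply,
      QuotientGroup.eq_one_iff, Subgroup.mem_subgroupOf]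
    show (x : G) ∈ J ↔ (x : G) ∈ D
    constructor
    · intro hxJ
      obtain ⟨n, hn, m, hm, hdec⟩ := hsupJ x hxJ
      have hnY'' : n ∈ Y'' := by
        have heq : n = x * m⁻¹ := by rw [hdec]; group
        rw [heq]
        exact mul_mem (Subgroup.mem_inf.mp hx).2
          (inv_mem (hY'Y'' (Subgroup.mem_inf.mp hm).2))
      rw [hdec]
      exact mul_mem (Subgroup.mem_sup_right (Subgroup.mem_inf.mpr ⟨hn, hnY''⟩))
        (Subgroup.mem_sup_left hm)
    · intro hxD
      refine (sup_le (le_sup_right : K' ≤ J)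
        ((inf_le_left : A' ⊓ Y'' ≤ A').trans le_sup_left) : D ≤ J) hxD
  intro _ _
  exact ⟨((QuotientGroup.quotientMulEquivOfEq hker.symm).trans
    (QuotientGroup.quotientKerEquivOfSurjective φ hφsurj)).symm⟩

end Aux

section XFacts

variable {S : Type*} [Group S]

theorem Xnat_le_B (B : Subgroup (S × S)) : ∀ n, Xnat B n ≤ B := by
  intro n; cases n <;> exact inf_le_left

theorem Xnat_mono_succ (B : Subgroup (S × S)) : ∀ n, Xnat B n ≤ Xnat B (n + 1) := by
  intro n
  induction n with
  | zero =>
    intro b hb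
    obtain ⟨hbB, hb1⟩ := Subgroup.mem_inf.mp hb
    simp only [MonoidHom.mem_ker, MonoidHom.coe_fst] at hb1
    refine Subgroup.mem_inf.mpr ⟨hbB, ?_⟩
    simp only [Subgroup.mem_comap, Subgroup.mem_map, MonoidHom.coe_fst, MonoidHom.coe_snd]
    exact ⟨1, one_mem _, by simp [hb1]⟩
  | succ n ih =>
    intro b hb
    obtain ⟨hbB, hb2⟩ := Subgroup.mem_inf.mp hb
    exact Subgroup.mem_inf.mpr ⟨hbB, (Subgroup.comap_mono (Subgroup.map_mono ih)) hb2⟩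

theorem Xnat_conj (B : Subgroup (S × S))
    (hB2 : Subgroup.map (MonoidHom.snd S S) B = ⊤) :
    ∀ n, ∀ g ∈ B, ∀ x ∈ Xnat B n, g * x * g⁻¹ ∈ Xnat B n := by
  intro n
  induction n with
  | zero =>
    intro g hg x hx
    obtain ⟨hxB, hx1⟩ := Subgroup.mem_inf.mp hx
    refine Subgroup.mem_inf.mpr ⟨mul_mem (mul_mem hg hxB) (inv_mem hg), ?_⟩
    simp only [MonoidHom.mem_ker, MonoidHom.coe_fst] at hx1 ⊢
    simp [Prod.fst_mul, Prod.fst_inv, hx1]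
  | succ n ih =>
    intro g hg x hx
    obtain ⟨hxB, hx2⟩ := Subgroup.mem_inf.mp hx
    refine Subgroup.mem_inf.mpr ⟨mul_mem (mul_mem hg hxB) (inv_mem hg), ?_⟩
    simp only [Subgroup.mem_comap, Subgroup.mem_map, MonoidHom.coe_fst,
      MonoidHom.coe_snd] at hx2 ⊢
    obtain ⟨u, hu, hux⟩ := hx2
    have : g.1 ∈ Subgroup.map (MonoidHom.snd S S) B := by rw [hB2]; trivial
    obtain ⟨c, hc, hcg⟩ := this
    refine ⟨c * u * c⁻¹, ih c hc u hu, ?_⟩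
    simp only [Prod.fst_mul, Prod.snd_mul, Prod.fst_inv, Prod.snd_inv, MonoidHom.coe_snd] at hcg ⊢
    rw [hcg, hux]

theorem X_eq_of_nonneg (B : Subgroup (S × S)) {i : ℤ} (h : 0 ≤ i) :
    X B i = Xnat B i.toNat := by
  simp [X, not_lt.mpr h]

theorem X_eq_of_neg (B : Subgroup (S × S)) {i : ℤ} (h : i < 0) : X B i = ⊥ := by
  simp [X, h]

theorem X_le_B (B : Subgroup (S × S)) (i : ℤ) : X B i ≤ B := by
  rcases lt_or_ge i 0 with h | h
  · rw [X_eq_of_neg B h]; exact bot_le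
  · rw [X_eq_of_nonneg B h]; exact Xnat_le_B B _

theorem X_conj (B : Subgroup (S × S))
    (hB2 : Subgroup.map (MonoidHom.snd S S) B = ⊤) (i : ℤ) :
    ∀ g ∈ B, ∀ x ∈ X B i, g * x * g⁻¹ ∈ X B i := by
  rcases lt_or_ge i 0 with h | h
  · rw [X_eq_of_neg B h]
    intro g _ x hx
    simp only [Subgroup.mem_bot] at hx ⊢
    simp [hx]
  · rw [X_eq_of_nonneg B h]
    exact Xnat_conj B hB2 _

theorem X_pred_le {B : Subgroup (S × S)} {j : ℤ} (hj0 : 0 ≤ j) :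
    X B (j - 1) ≤ X B j := by
  rcases lt_or_ge (j - 1) 0 with h | h
  · rw [X_eq_of_neg B h]; exact bot_le
  · rw [X_eq_of_nonneg B h, X_eq_of_nonneg B hj0]
    have : j.toNat = (j - 1).toNat + 1 := by omega
    rw [this]
    exact Xnat_mono_succ B _

end XFacts

/-- if moreover `Y' ⊴ Y''`, then `D ⊴ X_j ∩ Y''`, `J ⊴ H`, and
`H / J ≅ (X_j ∩ Y'') / D`. -/
theorem zassenhaus_style_quot_iso
    (B : Subgroup (S × S))
    (hB1 : Subgroup.map (MonoidHom.fst S S) B = ⊤)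
    (hB2 : Subgroup.map (MonoidHom.snd S S) B = ⊤)
    (ℓ : ℤ) (hℓ : 1 ≤ ℓ)
    (j : ℤ) (hj0 : 0 ≤ j) (hjℓ : j ≤ ℓ)
    (Y' Y'' : Subgroup (S × S)) (hY'B : Y' ≤ B) (hY''B : Y'' ≤ B)
    (hY'Y'' : Y' ≤ Y'') (hY'' : Y'' ≤ Y B (ℓ - j))
    (hnorm : (Y'.subgroupOf Y'').Normal) :
    (((X B j ⊓ Y') ⊔ (X B (j - 1) ⊓ Y'')).subgroupOf (X B j ⊓ Y'')).Normal ∧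
    (X B (j - 1) ⊔ (X B j ⊓ Y')) ≤ (X B (j - 1) ⊔ (X B j ⊓ Y'')) ∧
    (((X B (j - 1) ⊔ (X B j ⊓ Y')).subgroupOf (X B (j - 1) ⊔ (X B j ⊓ Y''))).Normal) ∧
    IsQuotIso (X B (j - 1) ⊔ (X B j ⊓ Y')) (X B (j - 1) ⊔ (X B j ⊓ Y''))
      ((X B j ⊓ Y') ⊔ (X B (j - 1) ⊓ Y'')) (X B j ⊓ Y'') := by
  have hA'A : X B (j - 1) ≤ X B j := X_pred_le hj0
  have hAB : X B j ≤ B := X_le_B B j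
  have hA'n := X_conj B hB2 (j - 1)
  have hAn := X_conj B hB2 j
  have hnorm' : ∀ g ∈ Y'', ∀ x ∈ Y', g * x * g⁻¹ ∈ Y' := by
    intro g hg x hx
    have := hnorm.conj_mem ⟨x, hY'Y'' hx⟩ hx ⟨g, hg⟩
    exact this
  exact abstract_zassenhaus B (X B (j - 1)) (X B j) Y' Y'' hA'A hAB hY''B hY'Y''
      hA'n hAn hnorm'

end GroupCodes
end
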